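/- Let M be a continuous semi-measure on binary strings (M(ε) ≤ 1 and M(x·0) + M(x·1) ≤ M(x) for all x), let ν be a monotone function from binary strings to binary strings (x ⊑ y implies ν(x) ⊑ ν(y)), and define μ(x) = ∑' over y ∈ ν⁻¹(x) of M(y), where ν⁻¹(x) = { y : x ⊑ ν(y), and either y = ε or ν(y⁻) is a proper prefix of x }. Then μ is itself a continuous semi-measure: μ(ε) ≤ 1 and μ(x·0) + μ(x·1) ≤ μ(x) for every binary string x. -/

import Mathlib

open scoped ENNReal

/-- The preimage set of a string `x` under a monotone machine `ν`:
the minimal inputs on which the output first reaches or passes `x`. -/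
def preimg (ν : List Bool → List Bool) (x : List Bool) : Set (List Bool) :=
  {y | x <+: ν y ∧ (y = [] ∨ (ν y.dropLast <+: x ∧ ν y.dropLast ≠ x))}

/-- Extending a strict prefix by one bit. -/
lemma exists_concat_prefix {z y : List Bool} (h : z <+: y) (hne : z ≠ y) :
    ∃ b, z ++ [b] <+: y := by
  obtain ⟨t, rfl⟩ := h
  cases t with
  | nil => simp at hne
  | cons b t' => exact ⟨b, t', by simp⟩

lemma not_both_bits {z y : List Bool} (h0 : z ++ [false] <+: y) (h1 : z ++ [true] <+: y) :
    False := by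
  rcases List.prefix_or_prefix_of_prefix h0 h1 with h | h <;>
    · have := h.eq_of_length (by simp)
      simp at this

/-- Finite Kraft inequality for semimeasures. -/
lemma kraft_fin (M : List Bool → ℝ≥0∞)
    (hM : ∀ x, M (x ++ [false]) + M (x ++ [true]) ≤ M x) :
    ∀ (n : ℕ) (z : List Bool) (S : Finset (List Bool)),
      (∀ y ∈ S, z <+: y ∧ y.length ≤ z.length + n) →
      (∀ y ∈ S, ∀ y' ∈ S, y <+: y' → y = y') →
      ∑ y ∈ S, M y ≤ M z := by
  intro n
  induction n with
  | zero =>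
    intro z S hS _
    have hsub : S ⊆ {z} := by
      intro y hy
      obtain ⟨hp, hl⟩ := hS y hy
      simp [(hp.eq_of_length_le (by simpa using hl)).symm]
    calc ∑ y ∈ S, M y ≤ ∑ y ∈ {z}, M y :=
          Finset.sum_le_sum_of_subset hsub
      _ = M z := by simp
  | succ n ih =>
    intro z S hS hanti
    by_cases hz : z ∈ S
    · have hsub : S ⊆ {z} := by
        intro y hy
        have := hanti z hz y hy (hS y hy).1
        simp [← this]
      calc ∑ y ∈ S, M y ≤ ∑ y ∈ {z}, M y := Finset.sum_le_sum_of_subset hsub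
        _ = M z := by simp
    · classical
      have key : ∀ b, ∑ y ∈ S.filter (z ++ [b] <+: ·), M y ≤ M (z ++ [b]) := by
        intro b
        refine ih (z ++ [b]) _ ?_ ?_
        · intro y hy
          simp only [Finset.mem_filter] at hy
          refine ⟨hy.2, ?_⟩
          have := (hS y hy.1).2
          simpa using by omega
        · intro y hy y' hy' hp
          simp only [Finset.mem_filter] at hy hy'
          exact hanti y hy.1 y' hy'.1 hp
      have hsplit : S.filter (z ++ [true] <+: ·) = S.filter (¬ z ++ [false] <+: ·) := by
        ext y
        simp only [Finset.mem_filter]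
        constructor
        · rintro ⟨hy, h1⟩
          exact ⟨hy, fun h0 => not_both_bits h0 h1⟩
        · rintro ⟨hy, h0⟩
          refine ⟨hy, ?_⟩
          obtain ⟨hp, _⟩ := hS y hy
          have hne : z ≠ y := fun h => hz (h ▸ hy)
          obtain ⟨b, hb⟩ := exists_concat_prefix hp hne
          cases b
          · exact absurd hb h0
          · exact hb
      calc ∑ y ∈ S, M y
          = ∑ y ∈ S.filter (z ++ [false] <+: ·), M y
            + ∑ y ∈ S.filter (¬ z ++ [false] <+: ·), M y :=
            (Finset.sum_filter_add_sum_filter_not S _ M).symm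
        _ = ∑ y ∈ S.filter (z ++ [false] <+: ·), M y
            + ∑ y ∈ S.filter (z ++ [true] <+: ·), M y := by rw [hsplit]
        _ ≤ M (z ++ [false]) + M (z ++ [true]) := add_le_add (key false) (key true)
        _ ≤ M z := hM z

/-- Kraft inequality, tsum version. -/
lemma kraft (M : List Bool → ℝ≥0∞)
    (hM : ∀ x, M (x ++ [false]) + M (x ++ [true]) ≤ M x)
    (z : List Bool) (A : Set (List Bool))
    (hpre : ∀ y ∈ A, z <+: y)
    (hanti : ∀ y ∈ A, ∀ y' ∈ A, y <+: y' → y = y') :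
    ∑' y : A, M y.1 ≤ M z := by
  rw [ENNReal.tsum_eq_iSup_sum]
  refine iSup_le fun s => ?_
  classical
  have : ∑ a ∈ s, M a.1 = ∑ y ∈ s.image Subtype.val, M y :=
    (Finset.sum_image (fun a _ b _ h => Subtype.ext h)).symm
  rw [this]
  refine kraft_fin M hM ((s.image Subtype.val).sup List.length) z _ ?_ ?_
  · intro y hy
    simp only [Finset.mem_image] at hy
    obtain ⟨a, ha, rfl⟩ := hy
    refine ⟨hpre _ a.2, ?_⟩
    have : (a : List Bool).length ≤ (s.image Subtype.val).sup List.length :=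
      Finset.le_sup (Finset.mem_image_of_mem _ ha)
    omega
  · intro y hy y' hy' hp
    simp only [Finset.mem_image] at hy hy'
    obtain ⟨a, _, rfl⟩ := hy
    obtain ⟨a', _, rfl⟩ := hy'
    exact hanti _ a.2 _ a'.2 hp

/-- The pushforward `μ(x) = M(ν⁻¹(x))` of a continuous semi-measure `M` under a
monotone machine `ν` is itself a continuous semi-measure (Theorem 5 of the paper). -/
theorem stmt8 (M : List Bool → ℝ≥0∞) (hM0 : M [] ≤ 1)
    (hM : ∀ x, M (x ++ [false]) + M (x ++ [true]) ≤ M x)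
    (ν : List Bool → List Bool)
    (hmono : ∀ x y : List Bool, x <+: y → ν x <+: ν y)
    (μ : List Bool → ℝ≥0∞)
    (hμ : ∀ x, μ x = ∑' y : preimg ν x, M y.1) :
    μ [] ≤ 1 ∧ ∀ x, μ (x ++ [false]) + μ (x ++ [true]) ≤ μ x := by
  -- elements of preimg extend nothing smaller; basic facts
  have hmem : ∀ x y, y ∈ preimg ν x ↔
      x <+: ν y ∧ (y = [] ∨ (ν y.dropLast <+: x ∧ ν y.dropLast ≠ x)) := fun _ _ => Iff.rfl
  -- preimg ν x is an antichain
  have antich : ∀ x, ∀ y ∈ preimg ν x, ∀ y' ∈ preimg ν x, y <+: y' → y = y' := by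
    intro x y hy y' hy' hp
    by_contra hne
    have hlt : y.length < y'.length :=
      lt_of_le_of_ne hp.length_le (fun h => hne (hp.eq_of_length h))
    have hy'ne : y' ≠ [] := by
      intro h; subst h; simp at hlt
    have hdp : y <+: y'.dropLast := by
      have h1 : y'.dropLast <+: y' := List.dropLast_prefix y'
      rcases List.prefix_or_prefix_of_prefix hp h1 with h | h
      · exact h
      · have := h.eq_of_length_le (by
          have := (List.length_dropLast : (y'.dropLast).length = y'.length - 1)
          omega)
        exact this ▸ List.prefix_refl _
    have h2 : x <+: ν y'.dropLast := hy.1.trans (hmono _ _ hdp)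
    rcases hy'.2 with h | ⟨h3, h4⟩
    · exact hy'ne h
    · exact h4 (h3.eq_of_length_le h2.length_le)
  -- existence of ancestor in preimg ν x
  have anc : ∀ x y, x <+: ν y → ∃ z, z <+: y ∧ z ∈ preimg ν x := by
    intro x y
    induction y using List.reverseRecOn with
    | nil => intro h; exact ⟨[], List.prefix_refl _, h, Or.inl rfl⟩
    | append_singleton w b ih =>
      intro h
      by_cases hw : x <+: ν w
      · obtain ⟨z, hz1, hz2⟩ := ih hw
        exact ⟨z, hz1.trans (by simp), hz2⟩
      · refine ⟨w ++ [b], List.prefix_refl _, h, Or.inr ?_⟩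
        rw [List.dropLast_concat]
        have hcmp : ν w <+: x ∨ x <+: ν w :=
          List.prefix_or_prefix_of_prefix (hmono w (w ++ [b]) (by simp)) h
        rcases hcmp with h1 | h1
        · exact ⟨h1, fun he => hw (he ▸ List.prefix_refl _)⟩
        · exact absurd h1 hw
  constructor
  · rw [hμ]
    have : preimg ν [] = {[]} := by
      ext y
      simp only [preimg, Set.mem_setOf_eq, Set.mem_singleton_iff]
      constructor
      · rintro ⟨-, h | ⟨h1, h2⟩⟩
        · exact h
        · exact absurd (List.prefix_nil.mp h1) h2
      · rintro rfl; exact ⟨List.nil_prefix, Or.inl rfl⟩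
    rw [this]
    calc ∑' y : ({[]} : Set (List Bool)), M y.1 = M [] := tsum_singleton _ _
      _ ≤ 1 := hM0
  · intro x
    -- fibers
    set F : Bool → List Bool → Set (List Bool) :=
      fun b z => {y | y ∈ preimg ν (x ++ [b]) ∧ z <+: y} with hF
    -- P_b ⊆ ⋃ z ∈ preimg ν x, F b z
    have hcover : ∀ b, preimg ν (x ++ [b]) ⊆ ⋃ z ∈ preimg ν x, F b z := by
      intro b y hy
      obtain ⟨z, hz1, hz2⟩ := anc x y ((List.prefix_append x [b]).trans hy.1)
      exact Set.mem_biUnion hz2 ⟨hy, hz1⟩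
    -- per-z bound
    have hperz : ∀ z ∈ preimg ν x,
        (∑' y : F false z, M y.1) + (∑' y : F true z, M y.1) ≤ M z := by
      intro z hz
      have hdisj : Disjoint (F false z) (F true z) := by
        rw [Set.disjoint_left]
        rintro y ⟨hy0, -⟩ ⟨hy1, -⟩
        exact not_both_bits hy0.1 hy1.1
      have hsum : (∑' y : ↥(F false z ∪ F true z), M y.1)
          = (∑' y : F false z, M y.1) + (∑' y : F true z, M y.1) :=
        ENNReal.summable.tsum_union_disjoint hdisj ENNReal.summable
      rw [← hsum]
      refine kraft M hM z _ ?_ ?_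
      · rintro y (⟨-, h⟩ | ⟨-, h⟩) <;> exact h
      · rintro y (⟨hy, -⟩ | ⟨hy, -⟩) y' (⟨hy', -⟩ | ⟨hy', -⟩) hp
        · exact antich (x ++ [false]) y hy y' hy' hp
        · exact absurd ((List.prefix_append x [false]).trans hy.1)
            (by
              have h1 : x ++ [true] <+: ν y' := hy'.1
              have h2 : ν y <+: ν y' := hmono _ _ hp
              intro h0
              have h0' : x ++ [false] <+: ν y' := hy.1.trans h2
              exact not_both_bits h0' h1)
        · exact absurd ((List.prefix_append x [true]).trans hy.1)
            (by
              have h1 : x ++ [false] <+: ν y' := hy'.1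
              have h2 : ν y <+: ν y' := hmono _ _ hp
              intro h0
              have h0' : x ++ [true] <+: ν y' := hy.1.trans h2
              exact not_both_bits h1 h0')
        · exact antich (x ++ [true]) y hy y' hy' hp
    -- main chain
    have hbound : ∀ b, μ (x ++ [b]) ≤ ∑' z : preimg ν x, ∑' y : F b z, M y.1 := by
      intro b
      rw [hμ]
      calc ∑' y : preimg ν (x ++ [b]), M y.1
          ≤ ∑' y : ↥(⋃ z ∈ preimg ν x, F b z), M y.1 := by
            have hinj := Set.inclusion_injective (hcover b)
            have := ENNReal.tsum_comp_le_tsum_of_injective hinj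
              (fun y : ↥(⋃ z ∈ preimg ν x, F b z) => M y.1)
            simpa using this
        _ ≤ ∑' z : preimg ν x, ∑' y : F b z, M y.1 :=
            ENNReal.tsum_biUnion_le_tsum (fun y => M y) (preimg ν x) (F b)
    calc μ (x ++ [false]) + μ (x ++ [true])
        ≤ (∑' z : preimg ν x, ∑' y : F false z, M y.1)
          + (∑' z : preimg ν x, ∑' y : F true z, M y.1) :=
          add_le_add (hbound false) (hbound true)
      _ = ∑' z : preimg ν x,
            ((∑' y : F false z, M y.1) + (∑' y : F true z, M y.1)) :=
          (ENNReal.tsum_add).symm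
      _ ≤ ∑' z : preimg ν x, M z.1 :=
          ENNReal.tsum_le_tsum fun z => hperz z.1 z.2
      _ = μ x := (hμ x).symm
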